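/- arXiv:1212.6487 — 3 statements merged into one kernel-verified Lean document; each statement's English description precedes it below -/
import Mathlib

section
/- The function (μ,ν) ↦ k_{μν} on pairs of partitions is uniquely determined by the three properties: k_{∅∅} = 0, k_{μν} = k_{νμ}, and k_{[a,μ]ν} = k_{μν} + |μ| - |ν| whenever a ≥ μ_1 and a ≥ ν_1. -/
/-- A partition: a weakly decreasing sequence of natural numbers with
finitely many nonzero terms. -/
structure Partn where
  parts : ℕ → ℕ
  antitone : Antitone parts
  finite : ∃ N, ∀ n, N ≤ n → parts n = 0

namespace Partn

/-- The size `|μ| = Σ_j μ_j`. -/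
noncomputable def size (μ : Partn) : ℕ := ∑ᶠ j, μ.parts j

/-- The `i`-th column of the conjugate partition (for `i ≥ 1`):
`μ'_i = #{j : μ_j ≥ i}`. -/
noncomputable def conj (μ : Partn) (i : ℕ) : ℕ := Nat.card {j : ℕ // i ≤ μ.parts j}

/-- `k_{μν} = Σ_{i ≥ 1} (C(μ'_i,2) + C(ν'_i,2) - μ'_i ν'_i)`. -/
noncomputable def kk (μ ν : Partn) : ℤ :=
  ∑ᶠ i : ℕ, ((Nat.choose (μ.conj (i + 1)) 2 : ℤ) + (Nat.choose (ν.conj (i + 1)) 2 : ℤ)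
    - (μ.conj (i + 1) : ℤ) * (ν.conj (i + 1) : ℤ))

end Partn

/-- The empty partition. -/
def Partn.empty : Partn :=
  ⟨fun _ => 0, fun _ _ _ => le_refl 0, ⟨0, fun _ _ => rfl⟩⟩

lemma Partn.ext' {μ ν : Partn} (h : μ.parts = ν.parts) : μ = ν := by
  cases μ; cases ν; cases h; rfl

def Partn.tail (ρ : Partn) : Partn :=
  ⟨fun n => ρ.parts (n + 1), fun a b h => ρ.antitone (by omega),
    by obtain ⟨N, hN⟩ := ρ.finite; exact ⟨N, fun n hn => hN _ (by omega)⟩⟩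

lemma Partn.size_eq_sum (ρ : Partn) {N : ℕ} (hN : ∀ n, N ≤ n → ρ.parts n = 0) :
    ρ.size = ∑ i ∈ Finset.range N, ρ.parts i := by
  apply finsum_eq_sum_of_support_subset
  intro x hx
  simp only [Function.mem_support] at hx
  simp only [Finset.coe_range, Set.mem_Iio]
  by_contra h
  exact hx (hN x (by omega))

lemma Partn.size_tail (ρ : Partn) : ρ.size = ρ.parts 0 + ρ.tail.size := by
  obtain ⟨N, hN⟩ := ρ.finite
  rw [ρ.size_eq_sum (N := N + 1) (fun n hn => hN n (by omega)),
    ρ.tail.size_eq_sum (N := N) (fun n hn => hN (n+1) (by omega)),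
    Finset.sum_range_succ']
  simp [Partn.tail, Nat.add_comm]

/-- Functions on pairs of partitions satisfying `F(∅,∅)=0`, symmetry, and the
prepending recursion `F([a,μ],ν) = F(μ,ν) + |μ| - |ν|` (for `a ≥ μ_1, ν_1`)
are unique. -/
theorem kk_unique (F G : Partn → Partn → ℤ)
    (hF0 : F Partn.empty Partn.empty = 0)
    (hFsymm : ∀ μ ν, F μ ν = F ν μ)
    (hFrec : ∀ μ ν ρ : Partn, (∀ n, ρ.parts (n + 1) = μ.parts n) →
      μ.parts 0 ≤ ρ.parts 0 → ν.parts 0 ≤ ρ.parts 0 →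
      F ρ ν = F μ ν + (Partn.size μ : ℤ) - (Partn.size ν : ℤ))
    (hG0 : G Partn.empty Partn.empty = 0)
    (hGsymm : ∀ μ ν, G μ ν = G ν μ)
    (hGrec : ∀ μ ν ρ : Partn, (∀ n, ρ.parts (n + 1) = μ.parts n) →
      μ.parts 0 ≤ ρ.parts 0 → ν.parts 0 ≤ ρ.parts 0 →
      G ρ ν = G μ ν + (Partn.size μ : ℤ) - (Partn.size ν : ℤ)) :
    F = G := by
  suffices H : ∀ n ρ ν, Partn.size ρ + Partn.size ν = n → F ρ ν = G ρ ν by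
    funext ρ ν; exact H _ ρ ν rfl
  intro n
  induction n using Nat.strong_induction_on with
  | _ n ih =>
    intro ρ ν hn
    by_cases h0 : ρ.parts 0 = 0 ∧ ν.parts 0 = 0
    · have hρ : ρ = Partn.empty := Partn.ext' (funext fun k => by
        have := ρ.antitone (Nat.zero_le k); simp only [Partn.empty]; omega)
      have hν : ν = Partn.empty := Partn.ext' (funext fun k => by
        have := ν.antitone (Nat.zero_le k); simp only [Partn.empty]; omega)
      rw [hρ, hν, hF0, hG0]
    · rcases le_total (ν.parts 0) (ρ.parts 0) with hle | hle
      · have hpos : 0 < ρ.parts 0 := by omega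
        have htail : ∀ k, ρ.parts (k + 1) = ρ.tail.parts k := fun k => rfl
        have hle1 : ρ.tail.parts 0 ≤ ρ.parts 0 := ρ.antitone (Nat.zero_le 1)
        rw [hFrec ρ.tail ν ρ htail hle1 hle, hGrec ρ.tail ν ρ htail hle1 hle,
          ih (ρ.tail.size + ν.size) (by have := ρ.size_tail; omega) ρ.tail ν rfl]
      · have hpos : 0 < ν.parts 0 := by omega
        have htail : ∀ k, ν.parts (k + 1) = ν.tail.parts k := fun k => rfl
        have hle1 : ν.tail.parts 0 ≤ ν.parts 0 := ν.antitone (Nat.zero_le 1)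
        rw [hFsymm, hGsymm, hFrec ν.tail ρ ν htail hle1 hle, hGrec ν.tail ρ ν htail hle1 hle,
          ih (ν.tail.size + ρ.size) (by have := ν.size_tail; omega) ν.tail ρ rfl]
end

section
/- The generating function identity Σ_{n ≥ 0} q^n Σ_{|λ|=n} m_λ(1, z₂, z₂², ...) h_λ(1, z₁, z₁², ...) = ∏_{i,j ≥ 0} (1 - z₁^i z₂^j q)^{-1} holds as an identity of formal power series in q, z₁, z₂. -/
open PowerSeries

/-- The specialization `h_k(1, z, z², ...)` of the complete homogeneous symmetric
function: the coefficient of `z^N` counts multisets of exponents (one exponent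
`i ≥ 0` for each of the `k` chosen variables `x_{i+1} = z^i`) of size `k`
summing to `N`. -/
noncomputable def specH (k : ℕ) : PowerSeries ℤ :=
  PowerSeries.mk fun N => (Set.ncard {S : Multiset ℕ | Multiset.card S = k ∧ S.sum = N} : ℤ)

/-- The specialization `m_λ(1, z, z², ...)` of the monomial symmetric function:
the sum of `z^{Σ i·α_i}` over all distinct exponent sequences `α` whose multiset
of nonzero values equals the parts of `λ`. -/
noncomputable def specM (lam : Multiset ℕ) : PowerSeries ℤ :=
  PowerSeries.mk fun N => (Set.ncard {α : ℕ →₀ ℕ |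
    Multiset.map α α.support.val = lam ∧ (α.sum fun i a => i * a) = N} : ℤ)

/-- `[k]_z = ∏_{1 ≤ j ≤ k} (1 - z^j)`. -/
noncomputable def qfac (k : ℕ) : PowerSeries ℤ :=
  ∏ j ∈ Finset.range k, (1 - (PowerSeries.X : PowerSeries ℤ) ^ (j + 1))

/-- `h_λ(1,z,z²,...) = ∏_k h_{λ_k}(1,z,z²,...)`. -/
noncomputable def specHMulti (lam : Multiset ℕ) : PowerSeries ℤ :=
  (lam.map specH).prod

/-!
Expanding every factor `(1 - z₁ⁱ z₂ʲ q)⁻¹` as a geometric series, the coefficient of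
`z₁^d₀ z₂^d₁ q^d₂` in the product counts the ℕ-matrices `(a_ij)` with `∑ i a_ij = d₀`,
`∑ j a_ij = d₁` and `∑ a_ij = d₂`; the partial products over `[0, M)²` already see all of them
once `M > d₀, d₁`. Group such matrices by their column sums `α_j`: the nonzero `α_j` form a partition
`λ ⊢ d₂`, and the `α` of shape `λ` with `∑ j α_j = d₁` are what the coefficient of `z₂^d₁` in
`m_λ` counts. Once `α` is fixed the columns are independent multisets of `α_j` row indices,
counted by the coefficient of `z₁^d₀` in `∏_j h_{α_j} = h_λ`.
-/

open Finset

namespace Finsupp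

variable {σ : Type*}

theorem exists_nsmul_eq_iff {e x : σ →₀ ℕ} :
    (∃ n : ℕ, n • e = x) ↔ x = 0 ∨ e ≤ x ∧ ∃ n : ℕ, n • e = x - e := by
  constructor
  · rintro ⟨_ | n, rfl⟩
    · exact .inl (zero_smul ℕ e)
    · exact .inr ⟨le_add_self.trans_eq (succ_nsmul e n).symm, n,
        by rw [succ_nsmul, add_tsub_cancel_right]⟩
  · rintro (rfl | ⟨hle, n, hn⟩)
    · exact ⟨0, zero_smul ℕ e⟩
    · exact ⟨n + 1, by rw [succ_nsmul, hn, tsub_add_cancel_of_le hle]⟩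

theorem nsmul_left_injective {e : σ →₀ ℕ} (he : e ≠ 0) :
    Function.Injective fun n : ℕ => n • e := by
  obtain ⟨t, ht⟩ := Finsupp.ne_iff.mp he
  intro m n h
  have h' := DFunLike.congr_fun h t
  simp only [smul_apply, smul_eq_mul, coe_zero, Pi.zero_apply] at h' ht
  exact Nat.eq_of_mul_eq_mul_right (Nat.pos_of_ne_zero ht) h'

theorem ncard_setOf_weight_eq [DecidableEq σ] {ι : Type*} [DecidableEq ι] (s : Finset ι)
    (e : ι → σ →₀ ℕ) (he : ∀ i ∈ s, e i ≠ 0) (d : σ →₀ ℕ) :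
    {k : ι →₀ ℕ | ↑k.support ⊆ (s : Set ι) ∧ weight e k = d}.ncard =
      ({l ∈ s.finsuppAntidiag d | ∀ i ∈ s, ∃ n : ℕ, n • e i = l i} : Set (ι →₀ σ →₀ ℕ)).ncard := by
  let φ : (ι →₀ ℕ) → ι →₀ σ →₀ ℕ := fun k =>
    onFinset k.support (fun i => k i • e i) fun i hi =>
      mem_support_iff.2 fun h => hi (by rw [h, zero_smul])
  have hφ : ∀ k i, φ k i = k i • e i := fun _ _ => onFinset_apply
  have himage : φ '' {k | ↑k.support ⊆ (s : Set ι) ∧ weight e k = d} =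
      ({l ∈ s.finsuppAntidiag d | ∀ i ∈ s, ∃ n : ℕ, n • e i = l i} : Set (ι →₀ σ →₀ ℕ)) := by
    ext l
    simp only [Set.mem_image, Set.mem_ofPred_eq, mem_finsuppAntidiag]
    constructor
    · rintro ⟨k, ⟨hks, rfl⟩, rfl⟩
      refine ⟨⟨?_, fun i hi => hks (support_onFinset_subset hi)⟩,
        fun i _ => ⟨k i, (hφ k i).symm⟩⟩
      simp only [hφ, weight_apply]
      exact (sum_of_support_subset k hks (fun i c => c • e i) fun i _ => zero_smul ℕ _).symm
    · rintro ⟨⟨rfl, hls⟩, hl⟩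
      choose n hn using hl
      refine ⟨indicator s n, ⟨support_indicator_subset _ _, ?_⟩, ext fun i => ?_⟩
      · rw [weight_apply, sum_of_support_subset _ (support_indicator_subset _ _) _
          fun i _ => zero_smul ℕ (e i)]
        exact Finset.sum_congr rfl fun i hi => by rw [indicator_of_mem hi, hn i hi]
      · rw [hφ]
        by_cases hi : i ∈ s
        · rw [indicator_of_mem hi, hn i hi]
        · rw [indicator_of_notMem hi, zero_smul, notMem_support_iff.mp fun h => hi (hls h)]
  rw [← himage, Set.InjOn.ncard_image]
  rintro k ⟨hks, -⟩ k' ⟨hks', -⟩ h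
  ext i
  by_cases hi : i ∈ s
  · exact nsmul_left_injective (he i hi) (by simpa only [hφ] using DFunLike.congr_fun h i)
  · rw [notMem_support_iff.mp fun h => hi (hks h), notMem_support_iff.mp fun h => hi (hks' h)]

theorem support_subset_range_of_weight_id_le {c : ℕ →₀ ℕ} {n : ℕ} (hc : weight id c ≤ n) :
    c.support ⊆ range (n + 1) := fun _ hi =>
  mem_range.2 (Nat.lt_succ_of_le ((le_weight_of_ne_zero' id (mem_support_iff.1 hi)).trans hc))

end Finsupp

namespace MvPowerSeries

variable {σ R : Type*}

open Classical in
noncomputable def geomSeries [Semiring R] (e : σ →₀ ℕ) : MvPowerSeries σ R :=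
  fun x => if ∃ n : ℕ, n • e = x then 1 else 0

open Classical in
theorem coeff_geomSeries [Semiring R] (e x : σ →₀ ℕ) :
    coeff x (geomSeries e : MvPowerSeries σ R) = if ∃ n : ℕ, n • e = x then 1 else 0 :=
  rfl

theorem one_sub_monomial_mul_geomSeries [Ring R] {e : σ →₀ ℕ} (he : e ≠ 0) :
    (1 - monomial e 1) * geomSeries e = (1 : MvPowerSeries σ R) := by
  classical
  ext x
  rw [sub_mul, one_mul, map_sub, coeff_monomial_mul, coeff_one, coeff_geomSeries,
    Finsupp.exists_nsmul_eq_iff]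
  by_cases hx : x = 0
  · subst hx
    simp [he]
  · by_cases hle : e ≤ x <;> simp [hx, hle, coeff_geomSeries]

theorem invOfUnit_one_sub_monomial [Ring R] {e : σ →₀ ℕ} (he : e ≠ 0) :
    invOfUnit (1 - monomial e (1 : R)) 1 = geomSeries e := by
  classical
  refine left_inv_eq_right_inv (invOfUnit_mul _ _ ?_) (one_sub_monomial_mul_geomSeries he)
  rw [map_sub, map_one, ← coeff_zero_eq_constantCoeff_apply, coeff_monomial, if_neg he.symm,
    sub_zero, Units.val_one]

theorem coeff_prod_geomSeries [CommSemiring R] {ι : Type*} [DecidableEq ι] (s : Finset ι)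
    (e : ι → σ →₀ ℕ) (he : ∀ i ∈ s, e i ≠ 0) (d : σ →₀ ℕ) :
    coeff d (∏ i ∈ s, geomSeries (e i) : MvPowerSeries σ R) =
      {k : ι →₀ ℕ | ↑k.support ⊆ (s : Set ι) ∧ Finsupp.weight e k = d}.ncard := by
  classical
  rw [coeff_prod, Finset.sum_congr rfl fun l _ => by
      simp only [coeff_geomSeries]; exact Finset.prod_boole,
    Finset.sum_boole, ← Set.ncard_coe_finset, coe_filter, Finsupp.ncard_setOf_weight_eq s e he d]

end MvPowerSeries

theorem PowerSeries.coeff_prod_eq_card_finsupp {ι β R : Type*} [CommSemiring R] [DecidableEq ι]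
    [Zero β] (s : Finset ι) (f : ι → PowerSeries R) (C : ι → Finset β) (w : β → ℕ) (hw : w 0 = 0)
    (n : ℕ) (hf : ∀ j ∈ s, ∀ m ≤ n, coeff m (f j) = #{c ∈ C j | w c = m}) :
    coeff n (∏ j ∈ s, f j) = #{g ∈ s.finsupp C | ∑ j ∈ s, w (g j) = n} := by
  classical
  have hfibre : ∀ l ∈ s.finsuppAntidiag n,
      ∏ j ∈ s, coeff (l j) (f j) = #(s.finsupp fun j => {c ∈ C j | w c = l j}) := by
    intro l hl
    rw [mem_finsuppAntidiag] at hl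
    rw [card_finsupp, Nat.cast_prod]
    exact prod_congr rfl fun j hj =>
      hf j hj (l j) (hl.1 ▸ single_le_sum (fun _ _ => Nat.zero_le _) hj)
  rw [coeff_prod, sum_congr rfl hfibre, ← Nat.cast_sum]
  congr 1
  have hmaps : ∀ g ∈ {g ∈ s.finsupp C | ∑ j ∈ s, w (g j) = n},
      g.mapRange w hw ∈ s.finsuppAntidiag n := by
    intro g hg
    rw [mem_filter, mem_finsupp_iff] at hg
    rw [mem_finsuppAntidiag]
    exact ⟨hg.2, Finsupp.support_mapRange.trans hg.1.1⟩
  rw [card_eq_sum_card_fiberwise fun g hg => hmaps g hg]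
  refine sum_congr rfl fun l hl => congrArg card (Finset.ext fun g => ?_)
  rw [mem_finsuppAntidiag] at hl
  simp only [mem_filter, mem_finsupp_iff]
  constructor
  · rintro ⟨hgs, hgC⟩
    have hwl : ∀ j ∈ s, w (g j) = l j := fun j hj => (hgC j hj).2
    refine ⟨⟨⟨hgs, fun j hj => (hgC j hj).1⟩, by rw [sum_congr rfl hwl, hl.1]⟩, ?_⟩
    ext j
    by_cases hj : j ∈ s
    · exact hwl j hj
    · rw [Finsupp.mapRange_apply, Finsupp.notMem_support_iff.1 fun h => hj (hgs h), hw,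
        Finsupp.notMem_support_iff.1 fun h => hj (hl.2 h)]
  · rintro ⟨⟨⟨hgs, hgC⟩, -⟩, rfl⟩
    exact ⟨hgs, fun j hj => ⟨hgC j hj, rfl⟩⟩

theorem coeff_specH_eq_card {a m n : ℕ} (hm : m ≤ n) :
    coeff m (specH a) = #{c ∈ (range (n + 1)).finsuppAntidiag a | Finsupp.weight id c = m} := by
  rw [specH, coeff_mk, ← Set.ncard_coe_finset,
    ← Set.ncard_image_of_injective _ (Multiset.toFinsupp (α := ℕ)).injective]
  congr 2
  ext c
  rw [← Multiset.toFinsupp.apply_symm_apply c, Multiset.toFinsupp.injective.mem_set_image,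
    Multiset.toFinsupp.apply_symm_apply, Multiset.toFinsupp_symm_apply]
  simp only [Set.mem_ofPred_eq, Finsupp.card_toMultiset, Finsupp.sum_toMultiset, coe_filter,
    mem_finsuppAntidiag]
  change _ ∧ Finsupp.weight id c = m ↔ _
  constructor
  · rintro ⟨ha, hw⟩
    have hs := Finsupp.support_subset_range_of_weight_id_le (hw.trans_le hm)
    exact ⟨⟨(Finsupp.sum_of_support_subset c hs (fun _ => id) fun _ _ => rfl).symm.trans ha, hs⟩,
      hw⟩
  · rintro ⟨⟨ha, hs⟩, hw⟩
    exact ⟨(Finsupp.sum_of_support_subset c hs (fun _ => id) fun _ _ => rfl).trans ha, hw⟩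

section ColumnMatrices

variable {ι : Type*}

-- A matrix is stored by its columns: `g j i` is the entry in row `i` and column `j`.
noncomputable def columnSums (g : ι →₀ ℕ →₀ ℕ) : ι →₀ ℕ :=
  g.mapRange Finsupp.degree (map_zero _)

noncomputable def rowIndexSum (g : ι →₀ ℕ →₀ ℕ) : ℕ :=
  g.sum fun _ c => Finsupp.weight id c

theorem columnSums_apply (g : ι →₀ ℕ →₀ ℕ) (j : ι) : columnSums g j = (g j).degree :=
  Finsupp.mapRange_apply

theorem support_columnSums (g : ι →₀ ℕ →₀ ℕ) : (columnSums g).support = g.support := by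
  ext j
  simp [columnSums_apply, Finsupp.degree_eq_zero_iff]

theorem weight_id_le_rowIndexSum (g : ι →₀ ℕ →₀ ℕ) (j : ι) :
    Finsupp.weight id (g j) ≤ rowIndexSum g := by
  classical
  by_cases hj : j ∈ g.support
  · exact single_le_sum (f := fun j => Finsupp.weight id (g j)) (fun _ _ => Nat.zero_le _) hj
  · simp [Finsupp.notMem_support_iff.1 hj]

theorem setOf_columnSums_eq_rowIndexSum_eq [DecidableEq ι] (α : ι →₀ ℕ) (n : ℕ) :
    {g : ι →₀ ℕ →₀ ℕ | columnSums g = α ∧ rowIndexSum g = n} =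
      ↑{g ∈ α.support.finsupp fun j => (range (n + 1)).finsuppAntidiag (α j) |
        ∑ j ∈ α.support, Finsupp.weight id (g j) = n} := by
  ext g
  simp only [Set.mem_ofPred_eq, coe_filter, mem_finsupp_iff, mem_finsuppAntidiag']
  constructor
  · rintro ⟨rfl, rfl⟩
    rw [support_columnSums]
    refine ⟨⟨subset_rfl, fun j _ => ⟨(columnSums_apply g j).symm, ?_⟩⟩, rfl⟩
    exact Finsupp.support_subset_range_of_weight_id_le (weight_id_le_rowIndexSum g j)
  · rintro ⟨⟨hgs, hcol⟩, hsum⟩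
    refine ⟨Finsupp.ext fun j => ?_, ?_⟩
    · by_cases hj : j ∈ α.support
      · exact (columnSums_apply g j).trans (hcol j hj).1
      · rw [columnSums_apply, Finsupp.notMem_support_iff.1 fun h => hj (hgs h),
          Finsupp.notMem_support_iff.1 hj, map_zero]
    · rwa [rowIndexSum, Finsupp.sum_of_support_subset g hgs _ fun _ _ => map_zero _]

theorem finite_setOf_columnSums_eq_rowIndexSum_eq (α : ι →₀ ℕ) (n : ℕ) :
    {g : ι →₀ ℕ →₀ ℕ | columnSums g = α ∧ rowIndexSum g = n}.Finite := by
  classical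
  rw [setOf_columnSums_eq_rowIndexSum_eq]
  exact finite_toSet _

theorem coeff_prod_specH_eq_ncard (α : ι →₀ ℕ) (n : ℕ) :
    coeff n (∏ j ∈ α.support, specH (α j)) =
      {g : ι →₀ ℕ →₀ ℕ | columnSums g = α ∧ rowIndexSum g = n}.ncard := by
  classical
  rw [setOf_columnSums_eq_rowIndexSum_eq, Set.ncard_coe_finset]
  exact PowerSeries.coeff_prod_eq_card_finsupp _ _ _ _ (map_zero _) n fun j _ m hm =>
    coeff_specH_eq_card hm

theorem rowIndexSum_curry (k : ι × ℕ →₀ ℕ) : rowIndexSum k.curry = k.sum fun p c => c * p.2 :=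
  Finsupp.sum_curry_index k fun _ i c => c * i

theorem degree_columnSums_curry (k : ι × ℕ →₀ ℕ) :
    (columnSums k.curry).degree = k.sum fun _ c => c := by
  change ((columnSums k.curry).sum fun _ a => a) = _
  rw [columnSums, Finsupp.sum_mapRange_index fun _ => rfl]
  exact Finsupp.sum_curry_index k fun _ _ c => c

end ColumnMatrices

theorem weight_columnSums_curry (k : ℕ × ℕ →₀ ℕ) :
    Finsupp.weight id (columnSums k.curry) = k.sum fun p c => c * p.1 := by
  rw [Finsupp.weight_apply, columnSums, Finsupp.sum_mapRange_index fun j => zero_smul ℕ (id j),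
    ← Finsupp.sum_curry_index k fun j _ c => c * j]
  refine Finsupp.sum_congr fun j _ => ?_
  change Finsupp.degree (k.curry j) * j = _
  rw [Finsupp.degree_apply, Finset.sum_mul]
  rfl

-- `cell (j, i)` is the exponent of `z₁ⁱ z₂ʲ q`: pairs are (column, row), so that currying a
-- matrix produces its columns.
noncomputable def cell (p : ℕ × ℕ) : Fin 3 →₀ ℕ :=
  Finsupp.single 0 p.2 + Finsupp.single 1 p.1 + Finsupp.single 2 1

@[simp]
theorem cell_apply_zero (p : ℕ × ℕ) : cell p 0 = p.2 := by
  simp [cell]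

@[simp]
theorem cell_apply_one (p : ℕ × ℕ) : cell p 1 = p.1 := by
  simp [cell]

@[simp]
theorem cell_apply_two (p : ℕ × ℕ) : cell p 2 = 1 := by
  simp [cell]

theorem cell_ne_zero (p : ℕ × ℕ) : cell p ≠ 0 := fun h => by
  simpa using DFunLike.congr_fun h 2

theorem X_pow_mul_X_pow_mul_X {R : Type*} [Semiring R] (i j : ℕ) :
    (MvPowerSeries.X 0 ^ i * MvPowerSeries.X 1 ^ j * MvPowerSeries.X 2 :
      MvPowerSeries (Fin 3) R) = MvPowerSeries.monomial (cell (j, i)) 1 := by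
  rw [MvPowerSeries.X_pow_eq, MvPowerSeries.X_pow_eq, MvPowerSeries.X,
    MvPowerSeries.monomial_mul_monomial, MvPowerSeries.monomial_mul_monomial, mul_one, mul_one]
  rfl

theorem weight_cell_apply (k : ℕ × ℕ →₀ ℕ) (t : Fin 3) :
    Finsupp.weight cell k t = k.sum fun p c => c * cell p t := by
  rw [Finsupp.weight_apply, Finsupp.sum_apply]
  rfl

theorem weight_cell_eq_iff {k : ℕ × ℕ →₀ ℕ} {d : Fin 3 →₀ ℕ} :
    Finsupp.weight cell k = d ↔ rowIndexSum k.curry = d 0 ∧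
      Finsupp.weight id (columnSums k.curry) = d 1 ∧ (columnSums k.curry).degree = d 2 := by
  simp [degree_columnSums_curry, weight_columnSums_curry, rowIndexSum_curry, Finsupp.ext_iff,
    Fin.forall_fin_succ, weight_cell_apply]

theorem ncard_setOf_weight_cell_eq (d : Fin 3 →₀ ℕ) :
    {k : ℕ × ℕ →₀ ℕ | Finsupp.weight cell k = d}.ncard =
      {g : ℕ →₀ ℕ →₀ ℕ | rowIndexSum g = d 0 ∧ Finsupp.weight id (columnSums g) = d 1 ∧
        (columnSums g).degree = d 2}.ncard := by
  rw [← Set.ncard_image_of_injective _ Finsupp.curryEquiv.injective,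
    Equiv.image_eq_preimage_symm]
  congr 1
  ext g
  simp [weight_cell_eq_iff]

theorem support_subset_of_weight_cell_eq {k : ℕ × ℕ →₀ ℕ} {d : Fin 3 →₀ ℕ}
    (hk : Finsupp.weight cell k = d) : k.support ⊆ range (d 1 + 1) ×ˢ range (d 0 + 1) := by
  intro p hp
  have h := hk ▸ Finsupp.le_weight_of_ne_zero' cell (Finsupp.mem_support_iff.1 hp)
  have h₀ := Finsupp.le_def.1 h 0
  have h₁ := Finsupp.le_def.1 h 1
  rw [cell_apply_zero] at h₀
  rw [cell_apply_one] at h₁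
  simp only [mem_product, mem_range]
  omega

theorem coeff_prod_invOfUnit_eq_ncard {d : Fin 3 →₀ ℕ} {M : ℕ} (hM : max (d 0) (d 1) < M) :
    MvPowerSeries.coeff d (∏ p ∈ range M ×ˢ range M, MvPowerSeries.invOfUnit
        (1 - (MvPowerSeries.X 0 : MvPowerSeries (Fin 3) ℤ) ^ p.1 * MvPowerSeries.X 1 ^ p.2 *
          MvPowerSeries.X 2) 1) =
      ({g : ℕ →₀ ℕ →₀ ℕ | rowIndexSum g = d 0 ∧ Finsupp.weight id (columnSums g) = d 1 ∧
        (columnSums g).degree = d 2}.ncard : ℤ) := by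
  have hfactor : ∀ p : ℕ × ℕ, MvPowerSeries.invOfUnit
      (1 - (MvPowerSeries.X 0 : MvPowerSeries (Fin 3) ℤ) ^ p.1 * MvPowerSeries.X 1 ^ p.2 *
        MvPowerSeries.X 2) 1 = MvPowerSeries.geomSeries (cell p.swap) := fun p => by
    rw [X_pow_mul_X_pow_mul_X, MvPowerSeries.invOfUnit_one_sub_monomial (cell_ne_zero _)]
    rfl
  have hswap : ∏ p ∈ range M ×ˢ range M, MvPowerSeries.geomSeries (R := ℤ) (cell p.swap) =
      ∏ p ∈ range M ×ˢ range M, MvPowerSeries.geomSeries (cell p) :=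
    prod_equiv (Equiv.prodComm ℕ ℕ) (fun _ => by simp [and_comm]) fun _ _ => by
      rw [Equiv.prodComm_apply]
  rw [prod_congr rfl fun p _ => hfactor p, hswap,
    MvPowerSeries.coeff_prod_geomSeries _ _ fun p _ => cell_ne_zero p,
    ← ncard_setOf_weight_cell_eq]
  congr 2
  ext k
  refine and_iff_right_of_imp fun hk =>
    coe_subset.2 ((support_subset_of_weight_cell_eq hk).trans ?_)
  exact product_subset_product (range_subset_range.2 (by omega)) (range_subset_range.2 (by omega))

theorem coeff_specM (lam : Multiset ℕ) (m : ℕ) :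
    coeff m (specM lam) =
      {α : ℕ →₀ ℕ | α.support.val.map α = lam ∧ Finsupp.weight id α = m}.ncard := by
  simp only [specM, coeff_mk, Finsupp.weight_apply, smul_eq_mul, id, mul_comm]

theorem specHMulti_map_support {ι : Type*} (α : ι →₀ ℕ) :
    specHMulti (α.support.val.map α) = ∏ j ∈ α.support, specH (α j) := by
  rw [specHMulti, Multiset.map_map]
  rfl

theorem zero_notMem_map_support {ι : Type*} (α : ι →₀ ℕ) : 0 ∉ α.support.val.map α := by
  simp

theorem finite_setOf_zero_notMem_sum_eq (n : ℕ) :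
    {lam : Multiset ℕ | 0 ∉ lam ∧ lam.sum = n}.Finite :=
  (Set.finite_range (Nat.Partition.parts : n.Partition → Multiset ℕ)).subset fun lam ⟨h0, hsum⟩ =>
    ⟨⟨lam, fun hi => Nat.pos_of_ne_zero (by rintro rfl; exact h0 hi), hsum⟩, rfl⟩

theorem finite_setOf_map_support_eq (lam : Multiset ℕ) (m : ℕ) :
    {α : ℕ →₀ ℕ | α.support.val.map α = lam ∧ Finsupp.weight id α = m}.Finite :=
  (finite_toSet ((range (m + 1)).finsuppAntidiag lam.sum)).subset fun _ ⟨hlam, hw⟩ =>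
    mem_finsuppAntidiag'.2 ⟨hlam ▸ rfl, Finsupp.support_subset_range_of_weight_id_le hw.le⟩

theorem pairwiseDisjoint_setOf_columnSums_eq {ι : Type*} (s : Set (ι →₀ ℕ)) (n : ℕ) :
    s.PairwiseDisjoint fun α => {g : ι →₀ ℕ →₀ ℕ | columnSums g = α ∧ rowIndexSum g = n} :=
  fun _ _ _ _ hne => Set.disjoint_left.2 fun _ hg hg' => hne (hg.1.symm.trans hg'.1)

theorem coeff_specM_mul_coeff_specHMulti (lam : Multiset ℕ) (d₀ d₁ : ℕ) :
    coeff d₁ (specM lam) * coeff d₀ (specHMulti lam) =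
      (⋃ α ∈ {α : ℕ →₀ ℕ | α.support.val.map α = lam ∧ Finsupp.weight id α = d₁},
        {g : ℕ →₀ ℕ →₀ ℕ | columnSums g = α ∧ rowIndexSum g = d₀}).ncard := by
  have hA := finite_setOf_map_support_eq lam d₁
  have hcoeff : ∀ α ∈ {α : ℕ →₀ ℕ | α.support.val.map α = lam ∧ Finsupp.weight id α = d₁},
      ({g : ℕ →₀ ℕ →₀ ℕ | columnSums g = α ∧ rowIndexSum g = d₀}.ncard : ℤ) =
        coeff d₀ (specHMulti lam) := by
    rintro α ⟨rfl, -⟩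
    rw [specHMulti_map_support, coeff_prod_specH_eq_ncard]
  rw [coeff_specM, Set.Finite.ncard_biUnion hA
      (fun α _ => finite_setOf_columnSums_eq_rowIndexSum_eq α d₀)
      (pairwiseDisjoint_setOf_columnSums_eq _ d₀),
    Nat.cast_finsum_mem hA, finsum_mem_congr rfl hcoeff, ← finsum_one, Nat.cast_finsum_mem hA,
    finsum_mem_mul' _ _ hA]
  simp

theorem finsum_coeff_specM_mul_coeff_specHMulti (d₀ d₁ d₂ : ℕ) :
    ∑ᶠ lam ∈ {lam : Multiset ℕ | 0 ∉ lam ∧ lam.sum = d₂},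
        coeff d₁ (specM lam) * coeff d₀ (specHMulti lam) =
      {g : ℕ →₀ ℕ →₀ ℕ | rowIndexSum g = d₀ ∧ Finsupp.weight id (columnSums g) = d₁ ∧
        (columnSums g).degree = d₂}.ncard := by
  -- `A lam`: the column-sum vectors counted by `m_lam`; `F α`: the matrices with column sums `α`.
  set A : Multiset ℕ → Set (ℕ →₀ ℕ) := fun lam =>
    {α | α.support.val.map α = lam ∧ Finsupp.weight id α = d₁}
  set F : (ℕ →₀ ℕ) → Set (ℕ →₀ ℕ →₀ ℕ) := fun α => {g | columnSums g = α ∧ rowIndexSum g = d₀}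
  have hP := finite_setOf_zero_notMem_sum_eq d₂
  have hG : {g : ℕ →₀ ℕ →₀ ℕ | rowIndexSum g = d₀ ∧
      Finsupp.weight id (columnSums g) = d₁ ∧ (columnSums g).degree = d₂} =
      ⋃ lam ∈ {lam : Multiset ℕ | 0 ∉ lam ∧ lam.sum = d₂}, ⋃ α ∈ A lam, F α := by
    ext g
    simp only [Set.mem_ofPred_eq, Set.mem_iUnion, exists_prop, A, F]
    constructor
    · rintro ⟨h₀, h₁, h₂⟩
      exact ⟨_, ⟨zero_notMem_map_support _, h₂⟩, columnSums g, ⟨rfl, h₁⟩, rfl, h₀⟩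
    · rintro ⟨lam, ⟨-, h₂⟩, _, ⟨rfl, h₁⟩, rfl, h₀⟩
      exact ⟨h₀, h₁, h₂⟩
  rw [finsum_mem_congr rfl fun lam _ => coeff_specM_mul_coeff_specHMulti lam d₀ d₁,
    ← Nat.cast_finsum_mem hP, ← Set.Finite.ncard_biUnion hP fun lam _ =>
      (finite_setOf_map_support_eq lam d₁).biUnion fun α _ =>
        finite_setOf_columnSums_eq_rowIndexSum_eq α d₀, hG]
  intro lam _ lam' _ hne
  simp only [Function.onFun, Set.disjoint_left, Set.mem_iUnion, exists_prop]
  rintro g ⟨_, ⟨hlam, -⟩, rfl, -⟩ ⟨_, ⟨hlam', -⟩, hα', -⟩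
  exact hne (hlam.symm.trans (hα' ▸ hlam'))

open MvPowerSeries in
/-- The generating function identity
`Σ_{n ≥ 0} q^n Σ_{|λ|=n} m_λ(1,z₂,z₂²,...) h_λ(1,z₁,z₁²,...)
   = ∏_{i,j ≥ 0} (1 - z₁^i z₂^j q)^{-1}`
in `ℤ[[z₁, z₂, q]]` (variables `0, 1, 2` of `Fin 3`): the finite partial
products of the right-hand side converge coefficientwise to the left-hand
side. -/
theorem cauchy_product_identity :
    ∀ d : Fin 3 →₀ ℕ, ∃ N : ℕ, ∀ M : ℕ, N ≤ M →
      MvPowerSeries.coeff d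
        (∏ p ∈ Finset.range M ×ˢ Finset.range M,
          MvPowerSeries.invOfUnit
            (1 - (MvPowerSeries.X 0 : MvPowerSeries (Fin 3) ℤ) ^ p.1 *
              (MvPowerSeries.X 1) ^ p.2 * MvPowerSeries.X 2) 1)
      = ∑ᶠ lam ∈ {lam : Multiset ℕ | (0 : ℕ) ∉ lam ∧ lam.sum = d 2},
          (PowerSeries.coeff (d 1) (specM lam)) *
            (PowerSeries.coeff (d 0) (specHMulti lam)) := by
  intro d
  refine ⟨max (d 0) (d 1) + 1, fun M hM => ?_⟩
  rw [coeff_prod_invOfUnit_eq_ncard hM, finsum_coeff_specM_mul_coeff_specHMulti]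
end

section
/- The adjoint of multiplication by exp(Σ_{k≥1} a_k p_k / k) with respect to the Hall-Littlewood inner product (·,·)_z is the ring homomorphism Γ₊ sending p_k ↦ p_k + a_k/(1 - z^k): that is, (Γ₋(A) f, g)_z = (f, Γ₊(A/(1-z)) g)_z for all symmetric functions f, g. -/
noncomputable section

/-- The base field `ℚ(z)`. -/
abbrev Fz := RatFunc ℚ

/-- The Hall–Littlewood parameter `z`. -/
def z : Fz := RatFunc.X

/-- The ring of symmetric functions over `ℚ(z)`, modeled as the polynomial
ring on the power sums `p_1, p_2, …` (which are algebraically independent). -/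
abbrev Lam := MvPolynomial ℕ+ Fz

/-- The power sum `p_k`. -/
def p (k : ℕ+) : Lam := MvPolynomial.X k

/-- `p_μ = ∏_k p_{μ_k}` for a partition `μ` (a multiset of positive parts). -/
def pMu (μ : Multiset ℕ+) : Lam := (μ.map p).prod

/-- The size `|μ|` of a partition. -/
def degOf (μ : Multiset ℕ+) : ℕ := (μ.map fun i => (i : ℕ)).sum

/-- `z_μ = ∏_i i^{m_i(μ)} m_i(μ)!`. -/
def zMu (μ : Multiset ℕ+) : Fz :=
  (μ.map fun i => ((i : ℕ) : Fz)).prod *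
    ∏ i ∈ μ.toFinset, (Nat.factorial (μ.count i) : Fz)

/-- The complete homogeneous symmetric function
`h_k = Σ_{|μ| = k} z_μ⁻¹ p_μ`. -/
def hh (k : ℕ) : Lam := ∑ᶠ μ ∈ {μ : Multiset ℕ+ | degOf μ = k}, (zMu μ)⁻¹ • pMu μ

/-- Formal exponential of a power series (with coefficients in the
`ℚ(z)`-algebra `Lam`), defined coefficientwise by `Σ_n f^n/n!`. -/
def ExpPS (f : PowerSeries Lam) : PowerSeries Lam :=
  PowerSeries.mk fun N =>
    ∑ n ∈ Finset.range (N + 1), ((Nat.factorial n : Fz)⁻¹) • (PowerSeries.coeff N (f ^ n))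

/-- The series `exp(Σ_{k ≥ 1} t^k p_k / k)`; its `t^N`-coefficient is the
degree-`N` component of the "multiplication by `exp`" vertex operator data. -/
def genH : PowerSeries Lam :=
  ExpPS (PowerSeries.mk fun k => if h : 0 < k then (((k : ℕ) : Fz)⁻¹) • p ⟨k, h⟩ else 0)

/-- The Hall–Littlewood weight: for an exponent vector `s` (where `s i` is the
multiplicity `m_i` of the part `i`), `w(s) = ∏_i i^{m_i} m_i! (1-z^i)^{-m_i}`. -/
def wHL (s : ℕ+ →₀ ℕ) : Fz :=
  ∏ i ∈ s.support,
    ((i : ℕ) : Fz) ^ (s i) * (Nat.factorial (s i) : Fz) * ((1 - z ^ (i : ℕ)) ^ (s i))⁻¹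

/-- The Hall–Littlewood inner product `(·,·)_z` on `Lam`, determined by
`(p_μ, p_ν)_z = δ_{μν} z_μ ∏_i (1-z^{μ_i})⁻¹`. -/
def BHL (f g : Lam) : Fz :=
  ∑ s ∈ f.support, MvPolynomial.coeff s f * MvPolynomial.coeff s g * wHL s

/-- The standard Hall weight `∏_i i^{m_i} m_i!`. -/
def wStd (s : ℕ+ →₀ ℕ) : Fz :=
  ∏ i ∈ s.support, ((i : ℕ) : Fz) ^ (s i) * (Nat.factorial (s i) : Fz)

/-- The standard Hall inner product, determined by `(p_μ, p_ν) = δ_{μν} z_μ`. -/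
def BStd (f g : Lam) : Fz :=
  ∑ s ∈ f.support, MvPolynomial.coeff s f * MvPolynomial.coeff s g * wStd s

/-- `[k]_z = ∏_{1 ≤ j ≤ k} (1 - z^j)` as an element of `ℚ(z)`. -/
def qfacF (k : ℕ) : Fz := ∏ j ∈ Finset.range k, (1 - z ^ (j + 1))

/-- `b_μ(z) = ∏_{i ≥ 1} [m_i(μ)]_z`. -/
def bF (μ : Multiset ℕ+) : Fz := ∏ i ∈ μ.toFinset, qfacF (μ.count i)

/-- `h_λ = ∏_k h_{λ_k}`. -/
def hMulti (lam : Multiset ℕ+) : Lam := (lam.map fun i => hh (i : ℕ)).prod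

/-- Sum of the `k` largest parts of `μ`. -/
def topSum (μ : Multiset ℕ+) (k : ℕ) : ℕ :=
  (((μ.sort (· ≤ ·)).reverse.take k).map fun i => (i : ℕ)).sum

/-- Dominance order on partitions of the same size. -/
def Dominates (μ ν : Multiset ℕ+) : Prop := ∀ k, topSum ν k ≤ topSum μ k

end

noncomputable section

/-- Degree-`N` component of multiplication by `exp(Σ_k a_k p_k / k)` (for a
sequence of coefficients `a_k`), extracted via an auxiliary grading variable. -/
def gmA (a : ℕ+ → Fz) (N : ℕ) : Lam :=
  PowerSeries.coeff N
    (ExpPS (PowerSeries.mk fun k =>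
      if h : 0 < k then ((a ⟨k, h⟩ / ((k : ℕ) : Fz)) • p ⟨k, h⟩) else 0))

/-- The ring homomorphism `Γ₊(A/(1-z)) : p_k ↦ p_k + a_k/(1-z^k)`. -/
def GpA (a : ℕ+ → Fz) : Lam →ₐ[Fz] Lam :=
  MvPolynomial.aeval fun i => p i + MvPolynomial.C (a i / (1 - z ^ (i : ℕ)))

/-!
`BHL` is diagonal in the monomial basis `p^m` of `Lam`, with `(p^m, p^m)_z = ∏ m_i! κ_i^{m_i}`
where `κ_i = i / (1 - z^i)`. Put `c_i = a_i / i`. Multiplication by `exp(Σ_k c_k p_k)` sends `p^v`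
to `Σ_{t ≥ v} c^{t-v}/(t-v)! p^t`, while `Γ₊`, the substitution `p_i ↦ p_i + c_i κ_i`, sends `p^t`
to `Σ_{v ≤ t} binom(t, v) (cκ)^{t-v} p^v`. On a pair of monomials `p^v, p^t` the claim therefore
factors over the parts `i` into `c^(n-k)/(n-k)! · n! κ^n = binom(n, k) (cκ)^(n-k) · k! κ^k`.
-/

open Finsupp MvPolynomial

theorem hasFiniteSupport_ite_eq {α M : Type*} [DecidableEq α] [Zero M] (a : α) (y : M) :
    Function.HasFiniteSupport fun x : α => if a = x then y else 0 :=
  (Set.finite_singleton a).subset fun x hx => by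
    by_contra h
    exact hx (if_neg (Ne.symm h))

theorem Finsupp.degree_le_weight {σ : Type*} {w : σ → ℕ} (hw : ∀ i, 1 ≤ w i) (m : σ →₀ ℕ) :
    degree m ≤ weight w m := by
  rw [degree_eq_weight_one, weight_apply, weight_apply]
  exact Finset.sum_le_sum fun i _ => Nat.mul_le_mul_left _ (hw i)

section Coefficients
variable {σ K : Type*} [Field K]

def expCoeff (c : σ → K) (m : σ →₀ ℕ) : K :=
  m.prod fun i e => c i ^ e / e.factorial

def taylorCoeff {R : Type*} [CommSemiring R] (γ : σ → R) (t v : σ →₀ ℕ) : R :=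
  t.prod fun i e => (e.choose (v i) : R) * γ i ^ (e - v i)

variable [CharZero K]

theorem mul_expCoeff_sub_single (c : σ → K) {m : σ →₀ ℕ} {k : σ} (hk : m k ≠ 0) :
    c k * expCoeff c (m - single k 1) = m k * expCoeff c m := by
  classical
  have herase : (m - single k 1).erase k = m.erase k := by
    ext i
    by_cases hi : i = k <;> simp [hi, erase_ne]
  obtain ⟨d, hd⟩ : ∃ d, m k = d + 1 := Nat.exists_eq_succ_of_ne_zero hk
  have hzero : ∀ i, c i ^ 0 / (Nat.factorial 0 : K) = 1 := by simp
  rw [expCoeff, expCoeff, ← mul_prod_erase' _ k _ hzero, ← mul_prod_erase' m k _ hzero, herase,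
    tsub_apply, single_eq_same, hd, Nat.add_sub_cancel, ← mul_assoc, ← mul_assoc,
    Nat.factorial_succ]
  congr 1
  have := (Nat.cast_ne_zero (R := K)).2 d.factorial_ne_zero
  push_cast
  field_simp
  ring

theorem pow_div_factorial_mul_factorial_mul_pow (c κ : K) {k n : ℕ} (h : k ≤ n) :
    c ^ (n - k) / (n - k).factorial * (n.factorial * κ ^ n) =
      n.choose k * (c * κ) ^ (n - k) * (k.factorial * κ ^ k) := by
  obtain ⟨d, rfl⟩ := Nat.exists_eq_add_of_le h
  rw [Nat.add_sub_cancel_left, ← Nat.choose_mul_factorial_mul_factorial h, Nat.add_sub_cancel_left]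
  have := (Nat.cast_ne_zero (R := K)).2 d.factorial_ne_zero
  push_cast
  field_simp
  ring

theorem expCoeff_tsub_mul_prod (c κ : σ → K) {v t : σ →₀ ℕ} (h : v ≤ t) :
    expCoeff c (t - v) * t.prod (fun i e => e.factorial * κ i ^ e) =
      taylorCoeff (fun i => c i * κ i) t v * v.prod (fun i e => e.factorial * κ i ^ e) := by
  have hsub : (t - v).support ⊆ t.support := support_mono tsub_le_self
  rw [expCoeff, prod_of_support_subset _ hsub _ (fun _ _ => by simp),
    prod_of_support_subset _ (support_mono h) _ (fun _ _ => by simp), taylorCoeff, Finsupp.prod,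
    Finsupp.prod, ← Finset.prod_mul_distrib, ← Finset.prod_mul_distrib]
  exact Finset.prod_congr rfl fun i _ => pow_div_factorial_mul_factorial_mul_pow _ _ (h i)

end Coefficients

namespace MvPolynomial
variable {σ R : Type*} [CommSemiring R]

theorem prod_monomial {ι : Type*} (s : Finset ι) (m : ι → σ →₀ ℕ) (r : ι → R) :
    ∏ i ∈ s, monomial (m i) (r i) = monomial (∑ i ∈ s, m i) (∏ i ∈ s, r i) :=
  AddMonoidAlgebra.prod_single s m r

theorem X_add_C_pow (i : σ) (c : R) (n : ℕ) :
    (X i + C c) ^ n =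
      ∑ j ∈ Finset.range (n + 1), monomial (single i j) ((n.choose j : R) * c ^ (n - j)) := by
  rw [add_pow]
  refine Finset.sum_congr rfl fun j _ => ?_
  rw [X_pow_eq_monomial, ← C_pow, ← map_natCast C, mul_assoc, ← map_mul, mul_comm, C_mul_monomial,
    mul_one, mul_comm]

theorem coeff_mul_eq_sum_support (P f : MvPolynomial σ R) (t : σ →₀ ℕ) :
    coeff t (P * f) = ∑ v ∈ f.support, if v ≤ t then coeff (t - v) P * coeff v f else 0 := by
  conv_lhs => rw [f.as_sum]
  rw [Finset.mul_sum, coeff_sum]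
  simp_rw [coeff_mul_monomial']

variable [DecidableEq σ]

theorem finsuppProd_X_add_C_pow (γ : σ → R) (t : σ →₀ ℕ) :
    t.prod (fun i e => (X i + C (γ i)) ^ e) =
      ∑ v ∈ Finset.Iic t, monomial v (taylorCoeff γ t v) := by
  have hIic : Finset.Iic t = t.support.finsupp fun i => Finset.range (t i + 1) := by
    ext v
    rw [Finset.mem_Iic, Finset.mem_finsupp_iff]
    simp only [Finset.mem_range, Nat.lt_succ_iff]
    refine ⟨fun h => ⟨support_mono h, fun i _ => h i⟩, fun h i => ?_⟩
    by_cases hi : i ∈ t.support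
    · exact h.2 i hi
    · rw [Finsupp.notMem_support_iff.1 (mt (h.1 ·) hi)]
      exact Nat.zero_le _
  rw [Finsupp.prod]
  simp_rw [X_add_C_pow, Finset.prod_sum, hIic, Finset.finsupp, Finset.sum_map, prod_monomial]
  -- `Finset.finsupp` carries a classical `DecidableEq` instance
  refine Finset.sum_congr (by congr!) fun p _ => ?_
  set v := Finsupp.indicator t.support p
  have hv : ∀ i : t.support, p i i.2 = v i := fun i => (indicator_of_mem i.2 p).symm
  simp_rw [hv]
  rw [Finset.sum_attach t.support (fun i => single i (v i)),
    Finset.prod_attach t.support (fun i => ((t i).choose (v i) : R) * γ i ^ (t i - v i)),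
    ← v.sum_of_support_subset (support_indicator_subset _ _) _ (fun _ _ => single_zero _),
    v.sum_single]
  rfl

theorem coeff_aeval_X_add_C (γ : σ → R) (g : MvPolynomial σ R) (v : σ →₀ ℕ) :
    coeff v (aeval (fun i => X i + C (γ i)) g) =
      ∑ t ∈ g.support, coeff t g * if v ≤ t then taylorCoeff γ t v else 0 := by
  conv_lhs => rw [g.as_sum]
  simp_rw [map_sum, coeff_sum, aeval_monomial, algebraMap_eq, coeff_C_mul,
    finsuppProd_X_add_C_pow, coeff_sum, coeff_monomial, Finset.sum_ite_eq', Finset.mem_Iic]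

end MvPolynomial

section LinearSeries
variable {K : Type*} [Field K]

def linearSeries (c : ℕ+ → K) : PowerSeries (MvPolynomial ℕ+ K) :=
  PowerSeries.mk fun k => if h : 0 < k then c ⟨k, h⟩ • X ⟨k, h⟩ else 0

theorem coeff_coeff_linearSeries_mul (c : ℕ+ → K) (G : PowerSeries (MvPolynomial ℕ+ K))
    (N : ℕ) (m : ℕ+ →₀ ℕ) :
    coeff m (PowerSeries.coeff N (linearSeries c * G)) =
      ∑ k ∈ m.support,
        if (k : ℕ) ≤ N then c k * coeff (m - single k 1) (PowerSeries.coeff (N - k) G) else 0 := by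
  have hterm : ∀ i H, coeff m (PowerSeries.coeff i (linearSeries c) * H) =
      ∑ k ∈ m.support, if (k : ℕ) = i then c k * coeff (m - single k 1) H else 0 := by
    rintro (_ | i) H
    · simp [linearSeries]
    · classical
      have hk : ∀ k : ℕ+, (k : ℕ) = i + 1 ↔ k = i.succPNat := fun k => by
        rw [← PNat.coe_inj, Nat.succPNat_coe]
      have hcoeff : PowerSeries.coeff (i + 1) (linearSeries c) = c i.succPNat • X i.succPNat := by
        rw [linearSeries, PowerSeries.coeff_mk, dif_pos i.succ_pos]
        rfl
      simp_rw [hk, Finset.sum_ite_eq', hcoeff, smul_mul_assoc, coeff_smul, coeff_X_mul',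
        Finsupp.mem_support_iff, smul_eq_mul, mul_ite, mul_zero]
  rw [PowerSeries.coeff_mul, Finset.Nat.sum_antidiagonal_eq_sum_range_succ
    (fun i j => PowerSeries.coeff i (linearSeries c) * PowerSeries.coeff j G), coeff_sum]
  simp_rw [hterm]
  rw [Finset.sum_comm]
  simp_rw [Finset.sum_ite_eq, Finset.mem_range, Nat.lt_succ_iff]

theorem coeff_coeff_linearSeries_pow [CharZero K] (c : ℕ+ → K) (n N : ℕ) (m : ℕ+ →₀ ℕ) :
    coeff m (PowerSeries.coeff N (linearSeries c ^ n)) =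
      if degree m = n ∧ weight (↑) m = N then n.factorial * expCoeff c m else 0 := by
  induction n generalizing N m with
  | zero =>
    rw [pow_zero, PowerSeries.coeff_one]
    by_cases hm : m = 0
    · subst hm
      by_cases hN : N = 0 <;> simp [hN, expCoeff, eq_comm]
    · have hdeg : degree m ≠ 0 := by rwa [Ne, degree_eq_zero_iff]
      simp only [hdeg, false_and, if_false]
      split_ifs <;> simp [coeff_one, Ne.symm hm]
  | succ n ih =>
    have hterm : ∀ k ∈ m.support, (if (k : ℕ) ≤ N then c k * coeff (m - single k 1)
        (PowerSeries.coeff (N - k) (linearSeries c ^ n)) else 0) =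
        if degree m = n + 1 ∧ weight (↑) m = N then n.factorial * (m k * expCoeff c m) else 0 := by
      intro k hk
      have hk0 := Finsupp.mem_support_iff.1 hk
      have hdeg : degree (m - single k 1) + 1 = degree m := by
        simpa [degree_eq_weight_one] using weight_sub_single_add (w := fun _ => (1 : ℕ)) hk0
      have hwt : weight (↑) (m - single k 1) + (k : ℕ) = weight (↑) m := weight_sub_single_add hk0
      rw [ih, ← mul_expCoeff_sub_single c hk0]
      by_cases h : degree m = n + 1 ∧ weight (↑) m = N
      · rw [if_pos h, if_pos (by omega), if_pos (by omega)]
        ring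
      · rw [if_neg h, ite_eq_right_iff]
        intro hkN
        rw [if_neg (by omega), mul_zero]
    rw [pow_succ', coeff_coeff_linearSeries_mul, Finset.sum_congr rfl hterm]
    split_ifs with h
    · rw [← Finset.mul_sum, ← Finset.sum_mul, ← Nat.cast_sum, ← degree_apply, h.1,
        Nat.factorial_succ]
      push_cast
      ring
    · exact Finset.sum_const_zero

end LinearSeries

theorem coeff_gmA (a : ℕ+ → Fz) (N : ℕ) (m : ℕ+ →₀ ℕ) :
    coeff m (gmA a N) = if weight (↑) m = N then expCoeff (fun k => a k / k) m else 0 := by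
  have hgmA : gmA a N = ∑ n ∈ Finset.range (N + 1),
      (n.factorial : Fz)⁻¹ • PowerSeries.coeff N (linearSeries (fun k => a k / k) ^ n) := by
    rw [gmA, ExpPS, PowerSeries.coeff_mk]
    rfl
  simp_rw [hgmA, coeff_sum, coeff_smul, coeff_coeff_linearSeries_pow, smul_eq_mul]
  split_ifs with hN
  · have hdeg : degree m ∈ Finset.range (N + 1) :=
      Finset.mem_range.2 (Nat.lt_succ_of_le (hN ▸ degree_le_weight (fun i => i.pos) m))
    simp_rw [hN, and_true, mul_ite, mul_zero, Finset.sum_ite_eq, if_pos hdeg, ← mul_assoc]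
    rw [inv_mul_cancel₀ (Nat.cast_ne_zero.2 (Nat.factorial_ne_zero _)), one_mul]
  · simp [hN]

theorem coeff_gmA_mul (a : ℕ+ → Fz) (N : ℕ) (f : Lam) (t : ℕ+ →₀ ℕ) :
    coeff t (gmA a N * f) = ∑ v ∈ f.support, if weight (↑) (t - v) = N then
      coeff v f * (if v ≤ t then expCoeff (fun k => a k / k) (t - v) else 0) else 0 := by
  rw [coeff_mul_eq_sum_support]
  refine Finset.sum_congr rfl fun v _ => ?_
  rw [coeff_gmA]
  split_ifs <;> ring

theorem finsum_coeff_gmA_mul (a : ℕ+ → Fz) (f : Lam) (t : ℕ+ →₀ ℕ) :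
    ∑ᶠ N, coeff t (gmA a N * f) =
      ∑ v ∈ f.support, coeff v f * if v ≤ t then expCoeff (fun k => a k / k) (t - v) else 0 := by
  simp_rw [coeff_gmA_mul]
  rw [finsum_sum_comm _ _ fun v _ => hasFiniteSupport_ite_eq _ _]
  exact Finset.sum_congr rfl fun v _ =>
    (finsum_eq_single _ _ fun N hN => if_neg (Ne.symm hN)).trans (if_pos rfl)

theorem BHL_eq_sum_support_right (f g : Lam) :
    BHL f g = ∑ t ∈ g.support, coeff t f * coeff t g * wHL t := by
  rw [BHL]
  calc _ = ∑ t ∈ f.support ∪ g.support, coeff t f * coeff t g * wHL t :=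
        Finset.sum_subset Finset.subset_union_left fun t _ ht => by
          rw [MvPolynomial.notMem_support_iff.1 ht, zero_mul, zero_mul]
    _ = _ := (Finset.sum_subset Finset.subset_union_right fun t _ ht => by
          rw [MvPolynomial.notMem_support_iff.1 ht, mul_zero, zero_mul]).symm

theorem finsum_BHL_gmA_mul (a : ℕ+ → Fz) (f g : Lam) :
    ∑ᶠ N, BHL (gmA a N * f) g = ∑ t ∈ g.support, (∑ v ∈ f.support,
      coeff v f * if v ≤ t then expCoeff (fun k => a k / k) (t - v) else 0) * coeff t g * wHL t := by
  have hfin : ∀ t, Function.HasFiniteSupport fun N => coeff t (gmA a N * f) := fun t => by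
    simp_rw [coeff_gmA_mul]
    exact .sum (fun v => hasFiniteSupport_ite_eq _ _) _
  simp_rw [BHL_eq_sum_support_right, mul_assoc]
  rw [finsum_sum_comm _ _ fun t _ => (hfin t).subset (Function.support_mul_subset_left _ _)]
  simp_rw [← finsum_mul, finsum_coeff_gmA_mul]

theorem coeff_GpA (a : ℕ+ → Fz) (g : Lam) (v : ℕ+ →₀ ℕ) :
    coeff v (GpA a g) = ∑ t ∈ g.support,
      coeff t g * if v ≤ t then taylorCoeff (fun i => a i / (1 - z ^ (i : ℕ))) t v else 0 :=
  coeff_aeval_X_add_C _ g v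

theorem wHL_eq_prod (s : ℕ+ →₀ ℕ) :
    wHL s = s.prod fun i e => e.factorial * ((i : Fz) / (1 - z ^ (i : ℕ))) ^ e :=
  Finset.prod_congr rfl fun i _ => by
    dsimp only
    rw [div_pow]
    ring

theorem ite_expCoeff_mul_wHL (a : ℕ+ → Fz) (v t : ℕ+ →₀ ℕ) :
    (if v ≤ t then expCoeff (fun k => a k / k) (t - v) else 0) * wHL t =
      (if v ≤ t then taylorCoeff (fun i => a i / (1 - z ^ (i : ℕ))) t v else 0) * wHL v := by
  split_ifs with h
  · have hγ : (fun i : ℕ+ => a i / (1 - z ^ (i : ℕ))) =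
        fun i => a i / i * (i / (1 - z ^ (i : ℕ))) :=
      funext fun i => (div_mul_div_cancel₀ (Nat.cast_ne_zero.2 i.ne_zero)).symm
    rw [wHL_eq_prod, wHL_eq_prod, hγ, expCoeff_tsub_mul_prod _ _ h]
  · rw [zero_mul, zero_mul]

/-- Adjointness: `(Γ₋(A) f, g)_z = (f, Γ₊(A/(1-z)) g)_z` for all symmetric
functions `f, g`, where `Γ₋(A)` is multiplication by `exp(Σ_k a_k p_k/k)`. -/
theorem gammaMinus_adjoint (a : ℕ+ → Fz) (f g : Lam) :
    (∑ᶠ N : ℕ, BHL (gmA a N * f) g) = BHL f (GpA a g) := by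
  rw [finsum_BHL_gmA_mul, BHL]
  simp_rw [coeff_GpA, Finset.mul_sum, Finset.sum_mul]
  rw [Finset.sum_comm]
  refine Finset.sum_congr rfl fun v _ => Finset.sum_congr rfl fun t _ => ?_
  linear_combination (coeff v f * coeff t g) * ite_expCoeff_mul_wHL a v t

end
end
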